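/- arXiv:1808.04648 — 8 statements merged into one kernel-verified Lean document; each statement's English description precedes it below -/
import Mathlib

section
/- Let x* be a minimizer of P(x) := f(x) + g(Ax) with g(Ax*) finite, and let y* ∈ ℝ^n satisfy: (i) f(x) ≥ f(x*) − ⟨y*, A(x − x*)⟩ for all x ∈ ℝ^p (i.e. −Aᵀy* is a subgradient of f at x*), and (ii) g(Ax*) = ⟨Ax*, y*⟩ − h(y*) (Fenchel equality, i.e. y* attains the supremum defining g(Ax*)). Then for every β > 0, every center ẏ ∈ ℝ^n, and every x̄ ∈ ℝ^p with f(x̄) < +∞, the smoothed gap S_β(x̄; ẏ) := f(x̄) + g_β(Ax̄; ẏ) − P(x*) satisfies S_β(x̄; ẏ) ≥ β·b_Y(y*, y*_β(Ax̄; ẏ)) − β·b_Y(y*, ẏ). -/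
open RealInnerProductSpace

noncomputable section

/-- The Bregman distance induced by a prox-function `pY` with gradient map `pY'`. -/
def breg {n : ℕ} (pY : EuclideanSpace ℝ (Fin n) → ℝ)
    (pY' : EuclideanSpace ℝ (Fin n) → EuclideanSpace ℝ (Fin n))
    (y ydot : EuclideanSpace ℝ (Fin n)) : ℝ :=
  pY y - pY ydot - ⟪pY' ydot, y - ydot⟫

/-- `g(u) = sup_y { ⟨u, y⟩ − h(y) }`. -/
def gconj {n : ℕ} (h : EuclideanSpace ℝ (Fin n) → EReal)
    (u : EuclideanSpace ℝ (Fin n)) : EReal :=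
  ⨆ y : EuclideanSpace ℝ (Fin n), ((⟪u, y⟫ : ℝ) : EReal) - h y

/-- The smoothed function `g_β(u; ẏ) = sup_y { ⟨u, y⟩ − h(y) − β b_Y(y, ẏ) }`. -/
def gsmooth {n : ℕ} (h : EuclideanSpace ℝ (Fin n) → EReal)
    (pY : EuclideanSpace ℝ (Fin n) → ℝ)
    (pY' : EuclideanSpace ℝ (Fin n) → EuclideanSpace ℝ (Fin n))
    (β : ℝ) (ydot : EuclideanSpace ℝ (Fin n)) (u : EuclideanSpace ℝ (Fin n)) : EReal :=
  ⨆ y : EuclideanSpace ℝ (Fin n),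
    ((⟪u, y⟫ : ℝ) : EReal) - h y - ((β * breg pY pY' y ydot : ℝ) : EReal)

set_option maxHeartbeats 2000000 in
/-- the smoothed gap `S_β(x̄; ẏ) = f(x̄) + g_β(Ax̄; ẏ) − P(x*)` satisfies
`S_β(x̄; ẏ) ≥ β·b_Y(y*, y*_β(Ax̄; ẏ)) − β·b_Y(y*, ẏ)`. -/
theorem stmt7 {p n : ℕ}
    (A : EuclideanSpace ℝ (Fin p) →L[ℝ] EuclideanSpace ℝ (Fin n))
    (f : EuclideanSpace ℝ (Fin p) → EReal)
    (hf_proper : ∃ x, f x ≠ ⊤) (hf_nebot : ∀ x, f x ≠ ⊥)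
    (hf_lsc : LowerSemicontinuous f)
    (hf_conv : ∀ x₁ x₂ : EuclideanSpace ℝ (Fin p), ∀ a b : ℝ, 0 ≤ a → 0 ≤ b → a + b = 1 →
      f (a • x₁ + b • x₂) ≤ (a : EReal) * f x₁ + (b : EReal) * f x₂)
    (pY : EuclideanSpace ℝ (Fin n) → ℝ)
    (pY' : EuclideanSpace ℝ (Fin n) → EuclideanSpace ℝ (Fin n))
    (hgrad : ∀ y, HasGradientAt pY (pY' y) y)
    (hpconv : ConvexOn ℝ Set.univ pY)
    (hpstrong : StrongConvexOn Set.univ 1 pY)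
    (h : EuclideanSpace ℝ (Fin n) → EReal)
    (hproper : ∃ y, h y ≠ ⊤)
    (hne_bot : ∀ y, h y ≠ ⊥)
    (hlsc : LowerSemicontinuous h)
    (hconv : ∀ y₁ y₂ : EuclideanSpace ℝ (Fin n), ∀ a b : ℝ, 0 ≤ a → 0 ≤ b → a + b = 1 →
      h (a • y₁ + b • y₂) ≤ (a : EReal) * h y₁ + (b : EReal) * h y₂)
    -- `x*` is a minimizer of `P = f + g ∘ A` with `g(Ax*)` finite, `P(x*) = Pstar ∈ ℝ`
    (xstar : EuclideanSpace ℝ (Fin p)) (ystar : EuclideanSpace ℝ (Fin n)) (Pstar : ℝ)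
    (hmin : ∀ x, f xstar + gconj h (A xstar) ≤ f x + gconj h (A x))
    (hgfin : gconj h (A xstar) ≠ ⊤ ∧ gconj h (A xstar) ≠ ⊥)
    (hPstar : (Pstar : EReal) = f xstar + gconj h (A xstar))
    -- (i): `−Aᵀy*` is a subgradient of `f` at `x*`
    (hsubgrad : ∀ x : EuclideanSpace ℝ (Fin p),
      f xstar ≤ f x + ((⟪ystar, A x - A xstar⟫ : ℝ) : EReal))
    -- (ii): Fenchel equality: `y*` attains the supremum defining `g(Ax*)`
    (hfenchel : gconj h (A xstar) = ((⟪A xstar, ystar⟫ : ℝ) : EReal) - h ystar)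
    (β : ℝ) (hβ : 0 < β) (ydot : EuclideanSpace ℝ (Fin n))
    (xbar : EuclideanSpace ℝ (Fin p)) (hxbar : f xbar ≠ ⊤)
    -- `ystarβ` is the maximizer attaining the supremum defining `g_β(Ax̄; ẏ)`
    (ystarβ : EuclideanSpace ℝ (Fin n))
    (hystarβ : ∀ y : EuclideanSpace ℝ (Fin n),
      ((⟪A xbar, y⟫ : ℝ) : EReal) - h y - ((β * breg pY pY' y ydot : ℝ) : EReal) ≤
      ((⟪A xbar, ystarβ⟫ : ℝ) : EReal) - h ystarβ -
        ((β * breg pY pY' ystarβ ydot : ℝ) : EReal)) :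
    ((β * breg pY pY' ystar ystarβ - β * breg pY pY' ystar ydot : ℝ) : EReal) ≤
      f xbar + gsmooth h pY pY' β ydot (A xbar) - (Pstar : EReal) := by

  classical
  obtain ⟨hgt, hgb⟩ := hgfin
  -- h ystar is finite
  have hHs_ne_top : h ystar ≠ ⊤ := by
    intro h'
    rw [h', EReal.sub_top] at hfenchel
    exact hgb hfenchel
  set Hs := (h ystar).toReal with hHsdef
  have hHs : h ystar = (Hs : EReal) := (EReal.coe_toReal hHs_ne_top (hne_bot ystar)).symm
  have hGs : gconj h (A xstar) = ((⟪A xstar, ystar⟫ - Hs : ℝ) : EReal) := by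
    rw [hfenchel, hHs]; norm_cast
  -- f xstar is finite
  have hFs_ne_top : f xstar ≠ ⊤ := by
    intro h'
    rw [h', hGs, EReal.top_add_coe] at hPstar
    exact EReal.coe_ne_top _ hPstar
  set Fs := (f xstar).toReal with hFsdef
  have hFs : f xstar = (Fs : EReal) := (EReal.coe_toReal hFs_ne_top (hf_nebot xstar)).symm
  have hPs : Pstar = Fs + (⟪A xstar, ystar⟫ - Hs) := by
    rw [hFs, hGs] at hPstar
    exact_mod_cast hPstar
  -- f xbar is finite
  set Fb := (f xbar).toReal with hFbdef
  have hFb : f xbar = (Fb : EReal) := (EReal.coe_toReal hxbar (hf_nebot xbar)).symm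
  -- h ystarβ is finite
  have hmaxs := hystarβ ystar
  rw [hHs] at hmaxs
  have hHb_ne_top : h ystarβ ≠ ⊤ := by
    intro h'
    rw [h'] at hmaxs
    rw [EReal.sub_top, EReal.bot_sub] at hmaxs
    have : ((⟪A xbar, ystar⟫ : ℝ) : EReal) - (Hs : EReal) - ((β * breg pY pY' ystar ydot : ℝ) : EReal)
        = ((⟪A xbar, ystar⟫ - Hs - β * breg pY pY' ystar ydot : ℝ) : EReal) := by norm_cast
    rw [this] at hmaxs
    exact EReal.coe_ne_bot _ (le_bot_iff.mp hmaxs)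
  set Hb := (h ystarβ).toReal with hHbdef
  have hHb : h ystarβ = (Hb : EReal) := (EReal.coe_toReal hHb_ne_top (hne_bot ystarβ)).symm
  -- subgradient inequality in reals
  have hsubR : Fs ≤ Fb + ⟪ystar, A xbar - A xstar⟫ := by
    have := hsubgrad xbar
    rw [hFs, hFb] at this
    exact_mod_cast this
  have hinner0 : ⟪ystar, A xbar - A xstar⟫ = ⟪A xbar, ystar⟫ - ⟪A xstar, ystar⟫ := by
    rw [inner_sub_right, real_inner_comm ystar (A xbar), real_inner_comm ystar (A xstar)]
  -- setup for the key limit inequality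
  set v := ystar - ystarβ with hvdef
  set K : ℝ := ⟪pY' ydot, v⟫ with hKdef
  set C : ℝ := ⟪A xbar, v⟫ + Hb - Hs with hCdef
  set F : ℝ → ℝ := fun s => pY (ystarβ + s • v) with hFdef
  -- key inequality for each t ∈ (0,1]
  have key : ∀ t ∈ Set.Ioc (0:ℝ) 1, C ≤ β * slope F 0 t - β * K := by
    intro t ht
    obtain ⟨ht0, ht1⟩ := ht
    set yt := ystarβ + t • v with hytdef
    have hyt_eq : (1 - t) • ystarβ + t • ystar = yt := by
      rw [hytdef, hvdef]
      module
    have hconvt := hconv ystarβ ystar (1 - t) t (by linarith) (le_of_lt ht0) (by ring)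
    rw [hyt_eq, hHb, hHs] at hconvt
    have hrhs : ((1 - t : ℝ) : EReal) * (Hb : EReal) + (t : EReal) * (Hs : EReal)
        = (((1 - t) * Hb + t * Hs : ℝ) : EReal) := by norm_cast
    rw [hrhs] at hconvt
    have hyt_ne_top : h yt ≠ ⊤ :=
      ne_top_of_le_ne_top (EReal.coe_ne_top _) hconvt
    set Rt := (h yt).toReal with hRtdef
    have hRt : h yt = (Rt : EReal) := (EReal.coe_toReal hyt_ne_top (hne_bot yt)).symm
    have hRtle : Rt ≤ (1 - t) * Hb + t * Hs := by
      rw [hRt] at hconvt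
      exact_mod_cast hconvt
    have hmax := hystarβ yt
    rw [hRt, hHb] at hmax
    have hmaxR : ⟪A xbar, yt⟫ - Rt - β * breg pY pY' yt ydot
        ≤ ⟪A xbar, ystarβ⟫ - Hb - β * breg pY pY' ystarβ ydot := by
      have e1 : ((⟪A xbar, yt⟫ : ℝ) : EReal) - (Rt : EReal) - ((β * breg pY pY' yt ydot : ℝ) : EReal)
          = ((⟪A xbar, yt⟫ - Rt - β * breg pY pY' yt ydot : ℝ) : EReal) := by norm_cast
      have e2 : ((⟪A xbar, ystarβ⟫ : ℝ) : EReal) - (Hb : EReal) - ((β * breg pY pY' ystarβ ydot : ℝ) : EReal)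
          = ((⟪A xbar, ystarβ⟫ - Hb - β * breg pY pY' ystarβ ydot : ℝ) : EReal) := by norm_cast
      rw [e1, e2] at hmax
      exact_mod_cast hmax
    have ein1 : ⟪A xbar, yt⟫ = ⟪A xbar, ystarβ⟫ + t * ⟪A xbar, v⟫ := by
      rw [hytdef, inner_add_right, real_inner_smul_right]
    have ein2 : ⟪pY' ydot, yt - ydot⟫ = ⟪pY' ydot, ystarβ - ydot⟫ + t * K := by
      have : yt - ydot = (ystarβ - ydot) + t • v := by rw [hytdef]; abel
      rw [this, inner_add_right, real_inner_smul_right, hKdef]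
    have hb1 : breg pY pY' yt ydot = pY yt - pY ydot - (⟪pY' ydot, ystarβ - ydot⟫ + t * K) := by
      rw [breg, ein2]
    have hb2 : breg pY pY' ystarβ ydot = pY ystarβ - pY ydot - ⟪pY' ydot, ystarβ - ydot⟫ := rfl
    rw [ein1, hb1, hb2] at hmaxR
    have hstep : t * C + β * (t * K) ≤ β * (pY yt - pY ystarβ) := by
      rw [hCdef]; nlinarith [hmaxR, hRtle]
    have hslope_eq : slope F 0 t = (pY yt - pY ystarβ) / t := by
      rw [slope_def_field]
      have hF0 : F 0 = pY ystarβ := by simp [hFdef]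
      have hFt : F t = pY yt := rfl
      rw [hF0, hFt, sub_zero]
    rw [hslope_eq]
    have hdiv : C + β * K ≤ β * ((pY yt - pY ystarβ) / t) := by
      rw [mul_div_assoc', le_div_iff₀ ht0]
      nlinarith [hstep]
    linarith
  -- pass to the limit t → 0⁺
  have hlineD : HasDerivAt (fun s : ℝ => ystarβ + s • v) v 0 := by
    simpa using ((hasDerivAt_id (0:ℝ)).smul_const v).const_add ystarβ
  have hfd : HasFDerivAt pY ((InnerProductSpace.toDual ℝ _) (pY' ystarβ)) (ystarβ + (0:ℝ) • v) := by
    simpa using (hgrad ystarβ).hasFDerivAt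
  have hFder : HasDerivAt F ⟪pY' ystarβ, v⟫ 0 := by
    have h1 := hfd.comp_hasDerivAt 0 hlineD
    simp [InnerProductSpace.toDual_apply_apply] at h1
    exact h1
  have hslope := hasDerivAt_iff_tendsto_slope.mp hFder
  have hslope' : Filter.Tendsto (slope F 0) (nhdsWithin 0 (Set.Ioi 0)) (nhds ⟪pY' ystarβ, v⟫) :=
    hslope.mono_left (nhdsWithin_mono _ (fun x hx => by simpa using ne_of_gt hx))
  have htend : Filter.Tendsto (fun t => β * slope F 0 t - β * K) (nhdsWithin 0 (Set.Ioi 0))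
      (nhds (β * ⟪pY' ystarβ, v⟫ - β * K)) :=
    (hslope'.const_mul β).sub_const (β * K)
  have hstar : C ≤ β * ⟪pY' ystarβ, v⟫ - β * K :=
    ge_of_tendsto htend (Filter.mem_of_superset
      (Ioc_mem_nhdsGT_of_mem ⟨le_refl 0, zero_lt_one⟩) (fun t ht => key t ht))
  -- three-point identity (multiplied by β)
  have htp : β * breg pY pY' ystar ydot - β * breg pY pY' ystarβ ydot - β * breg pY pY' ystar ystarβ
      = β * ⟪pY' ystarβ, v⟫ - β * ⟪pY' ydot, v⟫ := by
    have e1 : ⟪pY' ydot, ystar - ydot⟫ = ⟪pY' ydot, ystarβ - ydot⟫ + ⟪pY' ydot, v⟫ := by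
      rw [← inner_add_right]
      congr 1
      rw [hvdef]; abel
    simp only [breg, e1, hvdef]
    ring
  -- the real-number core inequality
  set G : ℝ := ⟪A xbar, ystarβ⟫ - Hb - β * breg pY pY' ystarβ ydot with hGdef
  have hcore : β * breg pY pY' ystar ystarβ - β * breg pY pY' ystar ydot ≤ Fb + G - Pstar := by
    have hCv : ⟪A xbar, v⟫ = ⟪A xbar, ystar⟫ - ⟪A xbar, ystarβ⟫ := by
      rw [hvdef, inner_sub_right]
    rw [hGdef, hPs]
    rw [hCdef, hCv] at hstar
    rw [hKdef] at hstar
    linarith [hstar, htp, hsubR, hinner0.le, hinner0.ge]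
  -- lower bound on gsmooth
  have hGle : ((G : ℝ) : EReal) ≤ gsmooth h pY pY' β ydot (A xbar) := by
    have hterm : ((⟪A xbar, ystarβ⟫ : ℝ) : EReal) - h ystarβ - ((β * breg pY pY' ystarβ ydot : ℝ) : EReal)
        = ((G : ℝ) : EReal) := by
      rw [hHb, hGdef]; norm_cast
    rw [← hterm]
    exact le_iSup (fun y => ((⟪A xbar, y⟫ : ℝ) : EReal) - h y - ((β * breg pY pY' y ydot : ℝ) : EReal)) ystarβ
  -- conclude in EReal
  calc ((β * breg pY pY' ystar ystarβ - β * breg pY pY' ystar ydot : ℝ) : EReal)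
      ≤ ((Fb + G - Pstar : ℝ) : EReal) := by exact_mod_cast hcore
    _ = ((Fb : ℝ) : EReal) + ((G : ℝ) : EReal) - ((Pstar : ℝ) : EReal) := by norm_cast
    _ ≤ f xbar + gsmooth h pY pY' β ydot (A xbar) - ((Pstar : ℝ) : EReal) := by
        rw [hFb]
        exact EReal.sub_le_sub (add_le_add_right hGle _) (le_refl _)

end
end

section
/- (Lemma 1, first estimate.) For every β' > 0, every ẏ ∈ ℝ^n, and every x̄ ∈ ℝ^p with f(x̄) < +∞, one has f(x̄) − f* ≥ β'⟨ẏ, y*⟩ − ‖y*‖·dist_K(Ax̄ − b + β'ẏ). -/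
open RealInnerProductSpace

noncomputable section

/-- Lemma 1, first estimate: for every `β' > 0`, `ẏ`, and `x̄` with `f(x̄) < +∞`,
`f(x̄) − f* ≥ β'⟨ẏ, y*⟩ − ‖y*‖·dist_K(Ax̄ − b + β'ẏ)`. -/
theorem stmt8 {p n : ℕ}
    (K : Set (EuclideanSpace ℝ (Fin n)))
    (hKne : K.Nonempty) (hKcl : IsClosed K) (hKconv : Convex ℝ K)
    (A : EuclideanSpace ℝ (Fin p) →L[ℝ] EuclideanSpace ℝ (Fin n))
    (b : EuclideanSpace ℝ (Fin n))
    (f : EuclideanSpace ℝ (Fin p) → EReal)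
    (hf_proper : ∃ x, f x ≠ ⊤) (hf_nebot : ∀ x, f x ≠ ⊥)
    (hf_lsc : LowerSemicontinuous f)
    (hf_conv : ∀ x₁ x₂ : EuclideanSpace ℝ (Fin p), ∀ a b' : ℝ, 0 ≤ a → 0 ≤ b' → a + b' = 1 →
      f (a • x₁ + b' • x₂) ≤ (a : EReal) * f x₁ + (b' : EReal) * f x₂)
    -- the constrained problem `f* = min { f(x) : Ax − b ∈ K }` is attained at the feasible `x*`
    (fstar : ℝ) (xstar : EuclideanSpace ℝ (Fin p))
    (hfeas : A xstar - b ∈ K) (hval : f xstar = (fstar : EReal))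
    (hopt : ∀ x, A x - b ∈ K → (fstar : EReal) ≤ f x)
    -- `y*` is a Lagrange multiplier
    (ystar : EuclideanSpace ℝ (Fin n))
    (hmult : ∀ x : EuclideanSpace ℝ (Fin p), ∀ u ∈ K,
      (fstar : EReal) ≤ f x + ((⟪ystar, A x - b - u⟫ : ℝ) : EReal))
    (β' : ℝ) (hβ' : 0 < β') (ydot : EuclideanSpace ℝ (Fin n))
    (xbar : EuclideanSpace ℝ (Fin p)) (hxbar : f xbar ≠ ⊤) :
    ((β' * ⟪ydot, ystar⟫ -
        ‖ystar‖ * Metric.infDist (A xbar - b + β' • ydot) K : ℝ) : EReal) ≤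
      f xbar - (fstar : EReal) := by
  obtain ⟨u, huK, hu⟩ := hKcl.exists_infDist_eq_dist hKne (A xbar - b + β' • ydot)
  have hr : ((f xbar).toReal : EReal) = f xbar := EReal.coe_toReal hxbar (hf_nebot xbar)
  set r := (f xbar).toReal with hrdef
  have hmu := hmult xbar u huK
  rw [← hr, ← EReal.coe_add, EReal.coe_le_coe_iff] at hmu
  have hinner : ⟪ystar, A xbar - b - u⟫ =
      ⟪ystar, (A xbar - b + β' • ydot) - u⟫ - β' * ⟪ydot, ystar⟫ := by
    simp only [inner_sub_right, inner_add_right, inner_smul_right,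
      real_inner_comm ydot ystar]
    ring
  have hcs : ⟪ystar, (A xbar - b + β' • ydot) - u⟫ ≤
      ‖ystar‖ * Metric.infDist (A xbar - b + β' • ydot) K := by
    calc ⟪ystar, (A xbar - b + β' • ydot) - u⟫ ≤ ‖ystar‖ * ‖(A xbar - b + β' • ydot) - u‖ :=
          real_inner_le_norm _ _
      _ = ‖ystar‖ * Metric.infDist (A xbar - b + β' • ydot) K := by
          rw [hu, dist_eq_norm]
  have key : β' * ⟪ydot, ystar⟫ -
      ‖ystar‖ * Metric.infDist (A xbar - b + β' • ydot) K ≤ r - fstar := by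
    rw [hinner] at hmu; nlinarith
  rw [← hr, ← EReal.coe_sub, EReal.coe_le_coe_iff]
  exact key

end
end

section
/- (Lemma 1, second estimate.) For every β > 0, every ẏ ∈ ℝ^n, and every x̄ ∈ ℝ^p with f(x̄) < +∞, one has f(x̄) − f* ≤ S_β(x̄; ẏ) − (1/(2β_b))·dist_K(Ax̄ − b + β_b ẏ)² + (β_b/2)‖ẏ‖², where β_b := βL. -/
open RealInnerProductSpace

noncomputable section

/-- The support function `s_K(y) = sup_{u ∈ K} ⟨u, y⟩`, with values in `ℝ ∪ {+∞}`. -/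
def suppFn {n : ℕ} (K : Set (EuclideanSpace ℝ (Fin n)))
    (y : EuclideanSpace ℝ (Fin n)) : EReal :=
  ⨆ u ∈ K, ((⟪u, y⟫ : ℝ) : EReal)

/-- The smoothed function `g_β(w + b; ẏ) = sup_y { ⟨w, y⟩ − s_K(y) − β b_Y(y, ẏ) }`,
evaluated at `w = Ax − b`. -/
def gsmoothK {n : ℕ} (K : Set (EuclideanSpace ℝ (Fin n)))
    (pY : EuclideanSpace ℝ (Fin n) → ℝ)
    (pY' : EuclideanSpace ℝ (Fin n) → EuclideanSpace ℝ (Fin n))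
    (β : ℝ) (ydot : EuclideanSpace ℝ (Fin n)) (w : EuclideanSpace ℝ (Fin n)) : EReal :=
  ⨆ y : EuclideanSpace ℝ (Fin n),
    ((⟪w, y⟫ : ℝ) : EReal) - suppFn K y - ((β * breg pY pY' y ydot : ℝ) : EReal)

/-- Lemma 1, second estimate: with `β_b := βL`,
`f(x̄) − f* ≤ S_β(x̄; ẏ) − (1/(2β_b))·dist_K(Ax̄ − b + β_b ẏ)² + (β_b/2)‖ẏ‖²`. -/
theorem stmt9 {p n : ℕ}
    (K : Set (EuclideanSpace ℝ (Fin n)))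
    (hKne : K.Nonempty) (hKcl : IsClosed K) (hKconv : Convex ℝ K)
    (A : EuclideanSpace ℝ (Fin p) →L[ℝ] EuclideanSpace ℝ (Fin n))
    (b : EuclideanSpace ℝ (Fin n))
    (f : EuclideanSpace ℝ (Fin p) → EReal)
    (hf_proper : ∃ x, f x ≠ ⊤) (hf_nebot : ∀ x, f x ≠ ⊥)
    (hf_lsc : LowerSemicontinuous f)
    (hf_conv : ∀ x₁ x₂ : EuclideanSpace ℝ (Fin p), ∀ a b' : ℝ, 0 ≤ a → 0 ≤ b' → a + b' = 1 →
      f (a • x₁ + b' • x₂) ≤ (a : EReal) * f x₁ + (b' : EReal) * f x₂)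
    -- the constrained problem `f* = min { f(x) : Ax − b ∈ K }` is attained at the feasible `x*`
    (fstar : ℝ) (xstar : EuclideanSpace ℝ (Fin p))
    (hfeas : A xstar - b ∈ K) (hval : f xstar = (fstar : EReal))
    (hopt : ∀ x, A x - b ∈ K → (fstar : EReal) ≤ f x)
    -- the prox-function `p_Y`: differentiable, convex, 1-strongly convex, `L`-Lipschitz gradient
    (pY : EuclideanSpace ℝ (Fin n) → ℝ)
    (pY' : EuclideanSpace ℝ (Fin n) → EuclideanSpace ℝ (Fin n))
    (hgrad : ∀ y, HasGradientAt pY (pY' y) y)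
    (hpconv : ConvexOn ℝ Set.univ pY)
    (hpstrong : StrongConvexOn Set.univ 1 pY)
    (L : ℝ) (hL : 1 ≤ L) (hlip : LipschitzWith (Real.toNNReal L) pY')
    (hlow : ∀ y z, 1 / 2 * ‖y - z‖ ^ 2 ≤ breg pY pY' y z)
    (hup : ∀ y z, breg pY pY' y z ≤ L / 2 * ‖y - z‖ ^ 2)
    (β : ℝ) (hβ : 0 < β) (ydot : EuclideanSpace ℝ (Fin n))
    (xbar : EuclideanSpace ℝ (Fin p)) (hxbar : f xbar ≠ ⊤) :
    f xbar - (fstar : EReal) ≤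
      (f xbar + gsmoothK K pY pY' β ydot (A xbar - b) - (fstar : EReal)) -
        ((1 / (2 * (β * L)) *
          (Metric.infDist (A xbar - b + (β * L) • ydot) K) ^ 2 : ℝ) : EReal) +
        (((β * L) / 2 * ‖ydot‖ ^ 2 : ℝ) : EReal) := by
  have hβb : 0 < β * L := mul_pos hβ (lt_of_lt_of_le one_pos hL)
  set βb := β * L with hβbdef
  set w : EuclideanSpace ℝ (Fin n) := A xbar - b with hw
  set z : EuclideanSpace ℝ (Fin n) := A xbar - b + βb • ydot with hz
  -- projection of z onto K
  obtain ⟨u, huK, hunorm⟩ :=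
    exists_norm_eq_iInf_of_complete_convex hKne (hKcl.isComplete) hKconv z
  have hobtuse : ∀ v ∈ K, ⟪z - u, v - u⟫ ≤ 0 :=
    (norm_eq_iInf_iff_real_inner_le_zero hKconv huK).1 hunorm
  have hdist : Metric.infDist z K = ‖z - u‖ := by
    haveI : Nonempty K := hKne.to_subtype
    rw [Metric.infDist_eq_iInf]
    simp only [dist_eq_norm]
    exact hunorm.symm
  set ystar : EuclideanSpace ℝ (Fin n) := βb⁻¹ • (z - u) with hystar
  -- support function at ystar
  have hsupp : suppFn K ystar = ((⟪u, ystar⟫ : ℝ) : EReal) := by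
    apply le_antisymm
    · refine iSup₂_le fun v hv => ?_
      rw [EReal.coe_le_coe_iff]
      have h1 : ⟪v - u, ystar⟫ ≤ 0 := by
        rw [hystar, real_inner_smul_right, real_inner_comm]
        exact mul_nonpos_of_nonneg_of_nonpos (le_of_lt (inv_pos.2 hβb)) (hobtuse v hv)
      have := inner_sub_left (𝕜 := ℝ) v u ystar
      linarith [this ▸ h1]
    · exact le_iSup₂_of_le u huK le_rfl
  -- key real inequality
  set cr : ℝ := 1 / (2 * βb) * (Metric.infDist z K) ^ 2 with hcr
  set dr : ℝ := βb / 2 * ‖ydot‖ ^ 2 with hdr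
  have hkey : cr - dr ≤ ⟪w, ystar⟫ - ⟪u, ystar⟫ - β * breg pY pY' ystar ydot := by
    have hb : β * breg pY pY' ystar ydot ≤ βb / 2 * ‖ystar - ydot‖ ^ 2 := by
      have := hup ystar ydot
      have h2 := mul_le_mul_of_nonneg_left this (le_of_lt hβ)
      calc β * breg pY pY' ystar ydot ≤ β * (L / 2 * ‖ystar - ydot‖ ^ 2) := h2
        _ = βb / 2 * ‖ystar - ydot‖ ^ 2 := by rw [hβbdef]; ring
    have hinner : ⟪w, ystar⟫ - ⟪u, ystar⟫ = βb⁻¹ * ‖z - u‖ ^ 2 - ⟪z - u, ydot⟫ := by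
      have : w - u = (z - u) - βb • ydot := by rw [hz, hw]; abel
      rw [← inner_sub_left, this, inner_sub_left, hystar, real_inner_smul_right,
        real_inner_smul_right, real_inner_self_eq_norm_sq, real_inner_smul_left,
        real_inner_comm]
      field_simp
    have hnorm : ‖ystar - ydot‖ ^ 2 =
        βb⁻¹ ^ 2 * ‖z - u‖ ^ 2 - 2 * (βb⁻¹ * ⟪z - u, ydot⟫) + ‖ydot‖ ^ 2 := by
      rw [norm_sub_sq_real, hystar, norm_smul, real_inner_smul_left]
      rw [norm_inv, Real.norm_eq_abs, abs_of_pos hβb]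
      ring
    have hfin : ⟪w, ystar⟫ - ⟪u, ystar⟫ - βb / 2 * ‖ystar - ydot‖ ^ 2 = cr - dr := by
      rw [hinner, hcr, hdr, hdist, hnorm]
      field_simp
      ring
    linarith [hb, hfin]
  -- lower bound on gsmoothK
  have hg : ((cr - dr : ℝ) : EReal) ≤ gsmoothK K pY pY' β ydot w := by
    have h1 : ((⟪w, ystar⟫ : ℝ) : EReal) - suppFn K ystar
        - ((β * breg pY pY' ystar ydot : ℝ) : EReal) ≤ gsmoothK K pY pY' β ydot w :=
      le_iSup (fun y => ((⟪w, y⟫ : ℝ) : EReal) - suppFn K y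
        - ((β * breg pY pY' y ydot : ℝ) : EReal)) ystar
    refine le_trans ?_ h1
    rw [hsupp, ← EReal.coe_sub, ← EReal.coe_sub]
    exact_mod_cast hkey
  -- EReal bookkeeping
  obtain ⟨r, hr⟩ : ∃ r : ℝ, f xbar = (r : EReal) :=
    ⟨(f xbar).toReal, (EReal.coe_toReal hxbar (hf_nebot xbar)).symm⟩
  have m1 : (r : EReal) + ((cr - dr : ℝ) : EReal) ≤ (r : EReal) + gsmoothK K pY pY' β ydot w :=
    add_le_add le_rfl hg
  have m2 : ((r : EReal) + ((cr - dr : ℝ) : EReal) - (fstar : EReal)) - (cr : EReal) + (dr : EReal)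
      ≤ ((r : EReal) + gsmoothK K pY pY' β ydot w - (fstar : EReal)) - (cr : EReal) + (dr : EReal) :=
    add_le_add (EReal.sub_le_sub (EReal.sub_le_sub m1 le_rfl) le_rfl) le_rfl
  calc f xbar - (fstar : EReal) = ((r - fstar : ℝ) : EReal) := by rw [hr, ← EReal.coe_sub]
    _ = ((r + (cr - dr) - fstar - cr + dr : ℝ) : EReal) := congrArg _ (by ring)
    _ = ((r : EReal) + ((cr - dr : ℝ) : EReal) - (fstar : EReal)) - (cr : EReal) + (dr : EReal) := by
        norm_cast
    _ ≤ ((r : EReal) + gsmoothK K pY pY' β ydot w - (fstar : EReal)) - (cr : EReal) + (dr : EReal) :=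
        m2
    _ = (f xbar + gsmoothK K pY pY' β ydot w - (fstar : EReal)) - (cr : EReal) + (dr : EReal) := by
        rw [hr]
  done

end
end

section
/- (Lemma 1, third estimate.) For every β > 0, every ẏ ∈ ℝ^n, and every x̄ ∈ ℝ^p with f(x̄) < +∞, setting β_b := βL, the quantity ‖ẏ − y*‖² + (2/β_b)·S_β(x̄; ẏ) is nonnegative, and dist_K(Ax̄ − b + β_b ẏ) ≤ β_b·[ ‖y*‖ + ( ‖ẏ − y*‖² + (2/β_b)·S_β(x̄; ẏ) )^{1/2} ]. -/
open RealInnerProductSpace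

noncomputable section

/-- Lemma 1, third estimate: with `β_b := βL`,
`‖ẏ − y*‖² + (2/β_b)·S_β(x̄; ẏ) ≥ 0` and
`dist_K(Ax̄ − b + β_b ẏ) ≤ β_b·[ ‖y*‖ + (‖ẏ − y*‖² + (2/β_b)·S_β(x̄; ẏ))^{1/2} ]`. -/
theorem stmt10 {p n : ℕ}
    (K : Set (EuclideanSpace ℝ (Fin n)))
    (hKne : K.Nonempty) (hKcl : IsClosed K) (hKconv : Convex ℝ K)
    (A : EuclideanSpace ℝ (Fin p) →L[ℝ] EuclideanSpace ℝ (Fin n))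
    (b : EuclideanSpace ℝ (Fin n))
    (f : EuclideanSpace ℝ (Fin p) → EReal)
    (hf_proper : ∃ x, f x ≠ ⊤) (hf_nebot : ∀ x, f x ≠ ⊥)
    (hf_lsc : LowerSemicontinuous f)
    (hf_conv : ∀ x₁ x₂ : EuclideanSpace ℝ (Fin p), ∀ a b' : ℝ, 0 ≤ a → 0 ≤ b' → a + b' = 1 →
      f (a • x₁ + b' • x₂) ≤ (a : EReal) * f x₁ + (b' : EReal) * f x₂)
    -- the constrained problem `f* = min { f(x) : Ax − b ∈ K }` is attained at the feasible `x*`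
    (fstar : ℝ) (xstar : EuclideanSpace ℝ (Fin p))
    (hfeas : A xstar - b ∈ K) (hval : f xstar = (fstar : EReal))
    (hopt : ∀ x, A x - b ∈ K → (fstar : EReal) ≤ f x)
    -- `y*` is a Lagrange multiplier
    (ystar : EuclideanSpace ℝ (Fin n))
    (hmult : ∀ x : EuclideanSpace ℝ (Fin p), ∀ u ∈ K,
      (fstar : EReal) ≤ f x + ((⟪ystar, A x - b - u⟫ : ℝ) : EReal))
    -- the prox-function `p_Y`: differentiable, convex, 1-strongly convex, `L`-Lipschitz gradient
    (pY : EuclideanSpace ℝ (Fin n) → ℝ)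
    (pY' : EuclideanSpace ℝ (Fin n) → EuclideanSpace ℝ (Fin n))
    (hgrad : ∀ y, HasGradientAt pY (pY' y) y)
    (hpconv : ConvexOn ℝ Set.univ pY)
    (hpstrong : StrongConvexOn Set.univ 1 pY)
    (L : ℝ) (hL : 1 ≤ L) (hlip : LipschitzWith (Real.toNNReal L) pY')
    (hlow : ∀ y z, 1 / 2 * ‖y - z‖ ^ 2 ≤ breg pY pY' y z)
    (hup : ∀ y z, breg pY pY' y z ≤ L / 2 * ‖y - z‖ ^ 2)
    (β : ℝ) (hβ : 0 < β) (ydot : EuclideanSpace ℝ (Fin n))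
    (xbar : EuclideanSpace ℝ (Fin p)) (hxbar : f xbar ≠ ⊤) :
    ∀ S : ℝ, ((S : EReal) = f xbar + gsmoothK K pY pY' β ydot (A xbar - b) - (fstar : EReal)) →
      0 ≤ ‖ydot - ystar‖ ^ 2 + 2 / (β * L) * S ∧
      Metric.infDist (A xbar - b + (β * L) • ydot) K ≤
        (β * L) * (‖ystar‖ + Real.sqrt (‖ydot - ystar‖ ^ 2 + 2 / (β * L) * S)) := by
  intro S hS
  have hβb0 : 0 < β * L := mul_pos hβ (lt_of_lt_of_le one_pos hL)
  set βb := β * L with hβb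
  set w := A xbar - b with hw
  set v := w + βb • ydot with hv
  -- projection
  obtain ⟨ubar, hu_mem, hu_min⟩ :=
    exists_norm_eq_iInf_of_complete_convex hKne hKcl.isComplete hKconv v
  have hproj : ∀ u ∈ K, ⟪v - ubar, u - ubar⟫ ≤ 0 :=
    (norm_eq_iInf_iff_real_inner_le_zero hKconv hu_mem).1 hu_min
  set q := w - ubar with hq
  set y0 : EuclideanSpace ℝ (Fin n) := ydot + βb⁻¹ • q with hy0
  have hvub : v - ubar = βb • y0 := by
    rw [hy0, smul_add, smul_smul, mul_inv_cancel₀ hβb0.ne', one_smul, hv, hq]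
    module
  -- support function value at y0
  have hsupp : suppFn K y0 = ((⟪ubar, y0⟫ : ℝ) : EReal) := by
    apply le_antisymm
    · refine iSup₂_le fun u hu => ?_
      rw [EReal.coe_le_coe_iff]
      have h1 := hproj u hu
      rw [hvub] at h1
      have h2 : ⟪y0, u - ubar⟫ ≤ 0 := by
        nlinarith [real_inner_smul_left y0 (u - ubar) βb, h1, hβb0]
      have h3 : ⟪y0, u⟫ - ⟪y0, ubar⟫ ≤ 0 := by rw [← inner_sub_right]; exact h2
      linarith [h3, real_inner_comm u y0, real_inner_comm ubar y0]
    · exact le_iSup₂ (f := fun u (_ : u ∈ K) => ((⟪u, y0⟫ : ℝ) : EReal)) ubar hu_mem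
  -- lower bound on g by evaluating at y0
  set c' : ℝ := ⟪w, y0⟫ - ⟪ubar, y0⟫ - β * breg pY pY' y0 ydot with hc'
  set g := gsmoothK K pY pY' β ydot w with hg
  have hgle : ((c' : ℝ) : EReal) ≤ g := by
    have h1 : ((⟪w, y0⟫ : ℝ) : EReal) - suppFn K y0
        - ((β * breg pY pY' y0 ydot : ℝ) : EReal) ≤ g :=
      le_iSup (fun y => ((⟪w, y⟫ : ℝ) : EReal) - suppFn K y
        - ((β * breg pY pY' y ydot : ℝ) : EReal)) y0
    rw [hsupp] at h1
    rw [hc', EReal.coe_sub, EReal.coe_sub]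
    exact h1
  -- g is finite
  have hgbot : g ≠ ⊥ := fun h => by simp [h] at hgle
  have hgtop : g ≠ ⊤ := by
    intro h
    rw [h, EReal.add_top_of_ne_bot (hf_nebot xbar), EReal.top_sub_coe] at hS
    exact EReal.coe_ne_top S hS
  set F := (f xbar).toReal with hFdef
  have hF : f xbar = (F : EReal) := (EReal.coe_toReal hxbar (hf_nebot xbar)).symm
  set G := g.toReal with hGdef
  have hG : g = (G : EReal) := (EReal.coe_toReal hgtop hgbot).symm
  have hSreal : S = F + G - fstar := by
    rw [hF, hG, ← EReal.coe_add, ← EReal.coe_sub, EReal.coe_eq_coe_iff] at hS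
    exact hS
  have hGc : c' ≤ G := by rw [hG, EReal.coe_le_coe_iff] at hgle; exact hgle
  -- multiplier inequality
  have hmul : fstar ≤ F + ⟪ystar, q⟫ := by
    have h1 := hmult xbar ubar hu_mem
    rw [hF, ← EReal.coe_add, EReal.coe_le_coe_iff] at h1
    exact h1
  -- real estimates
  have hnq : ‖y0 - ydot‖ ^ 2 = βb⁻¹ ^ 2 * ‖q‖ ^ 2 := by
    have : y0 - ydot = βb⁻¹ • q := by rw [hy0]; abel
    rw [this, norm_smul, mul_pow]
    congr 1
    rw [Real.norm_eq_abs, abs_of_pos (inv_pos.2 hβb0)]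
  have hiq : ⟪q, y0⟫ = ⟪q, ydot⟫ + βb⁻¹ * ‖q‖ ^ 2 := by
    rw [hy0, inner_add_right, real_inner_smul_right, real_inner_self_eq_norm_sq]
  have hc'lb : ⟪q, ydot⟫ + ‖q‖ ^ 2 / (2 * βb) ≤ c' := by
    have h1 : breg pY pY' y0 ydot ≤ L / 2 * (βb⁻¹ ^ 2 * ‖q‖ ^ 2) := by
      rw [← hnq]; exact hup y0 ydot
    have h2 : (⟪q, y0⟫ : ℝ) = ⟪w, y0⟫ - ⟪ubar, y0⟫ := inner_sub_left w ubar y0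
    rw [hc', ← h2, hiq]
    have h3 : β * breg pY pY' y0 ydot ≤ β * (L / 2 * (βb⁻¹ ^ 2 * ‖q‖ ^ 2)) :=
      mul_le_mul_of_nonneg_left h1 hβ.le
    have h4 : β * (L / 2 * (βb⁻¹ ^ 2 * ‖q‖ ^ 2)) = ‖q‖ ^ 2 / (2 * βb) := by
      have hL0 : L ≠ 0 := by linarith
      rw [hβb]; field_simp
    have h5 : βb⁻¹ * ‖q‖ ^ 2 = 2 * (‖q‖ ^ 2 / (2 * βb)) := by field_simp
    linarith [h3, h4, h5]
  have hSlb : ⟪q, ydot - ystar⟫ + ‖q‖ ^ 2 / (2 * βb) ≤ S := by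
    have h1 : ⟪q, ydot - ystar⟫ = ⟪q, ydot⟫ - ⟪ystar, q⟫ := by
      rw [inner_sub_right, real_inner_comm q ystar]
    rw [h1, hSreal]
    linarith [hGc, hmul, hc'lb]
  set R : EuclideanSpace ℝ (Fin n) := (ydot - ystar) + βb⁻¹ • q with hR
  have hRsq : ‖R‖ ^ 2 = ‖ydot - ystar‖ ^ 2 + 2 * (βb⁻¹ * ⟪ydot - ystar, q⟫) + βb⁻¹ ^ 2 * ‖q‖ ^ 2 := by
    rw [hR, norm_add_sq_real, real_inner_smul_right, norm_smul, mul_pow,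
      Real.norm_eq_abs, abs_of_pos (inv_pos.2 hβb0)]
  have hkey : ‖R‖ ^ 2 ≤ ‖ydot - ystar‖ ^ 2 + 2 / βb * S := by
    have h1 : 2 / βb * (⟪q, ydot - ystar⟫ + ‖q‖ ^ 2 / (2 * βb)) ≤ 2 / βb * S :=
      mul_le_mul_of_nonneg_left hSlb (by positivity)
    have h0 : ∀ t r : ℝ, 2 / βb * (t + r / (2 * βb)) = 2 * (βb⁻¹ * t) + βb⁻¹ ^ 2 * r := by
      intro t r; field_simp
    have h2 : (⟪q, ydot - ystar⟫ : ℝ) = ⟪ydot - ystar, q⟫ := real_inner_comm _ _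
    rw [hRsq]
    calc ‖ydot - ystar‖ ^ 2 + 2 * (βb⁻¹ * ⟪ydot - ystar, q⟫) + βb⁻¹ ^ 2 * ‖q‖ ^ 2
        = ‖ydot - ystar‖ ^ 2 + 2 / βb * (⟪q, ydot - ystar⟫ + ‖q‖ ^ 2 / (2 * βb)) := by
          rw [h0, h2]; ring
      _ ≤ ‖ydot - ystar‖ ^ 2 + 2 / βb * S := by linarith [h1]
  have hnn : 0 ≤ ‖ydot - ystar‖ ^ 2 + 2 / βb * S := le_trans (by positivity) hkey
  refine ⟨hnn, ?_⟩
  have hRle : ‖R‖ ≤ Real.sqrt (‖ydot - ystar‖ ^ 2 + 2 / βb * S) := by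
    rw [← Real.sqrt_sq (norm_nonneg R)]
    exact Real.sqrt_le_sqrt hkey
  have hdist : Metric.infDist v K ≤ ‖v - ubar‖ := by
    rw [← dist_eq_norm]; exact Metric.infDist_le_dist_of_mem hu_mem
  have hvR : v - ubar = βb • (R + ystar) := by
    rw [hvub, hR, hy0]; congr 1; abel
  have hnorm : ‖v - ubar‖ = βb * ‖R + ystar‖ := by
    rw [hvR, norm_smul, Real.norm_eq_abs, abs_of_pos hβb0]
  calc Metric.infDist v K ≤ βb * ‖R + ystar‖ := by rw [← hnorm]; exact hdist
    _ ≤ βb * (‖ystar‖ + Real.sqrt (‖ydot - ystar‖ ^ 2 + 2 / βb * S)) := by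
        apply mul_le_mul_of_nonneg_left _ hβb0.le
        calc ‖R + ystar‖ ≤ ‖R‖ + ‖ystar‖ := norm_add_le _ _
          _ ≤ _ := by linarith [hRle]


end
end

section
/- For every β > 0, every ẏ ∈ ℝ^n, and every x̄ ∈ ℝ^p with f(x̄) < +∞, the smoothed gap satisfies S_β(x̄; ẏ) ≥ β·b_Y(y*, y*_β(Ax̄; ẏ)) − β·b_Y(y*, ẏ), where y*_β(Ax̄; ẏ) denotes the unique maximizer attaining the supremum defining g_β(Ax̄; ẏ); consequently, with β_b := βL, one has ‖ẏ − y*‖² + (2/β_b)·S_β(x̄; ẏ) ≥ 0. -/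
open RealInnerProductSpace

noncomputable section

lemma grad_ineq {n : ℕ} {pY : EuclideanSpace ℝ (Fin n) → ℝ}
    (hpconv : ConvexOn ℝ Set.univ pY) {x g : EuclideanSpace ℝ (Fin n)}
    (hg : HasGradientAt pY g x) (y : EuclideanSpace ℝ (Fin n)) :
    pY x + ⟪g, y - x⟫ ≤ pY y := by
  have hline : ∀ t : ℝ, (AffineMap.lineMap x y : ℝ →ᵃ[ℝ] EuclideanSpace ℝ (Fin n)) t
      = x + t • (y - x) := by
    intro t
    rw [AffineMap.lineMap_apply_module']
    abel
  have hφconv : ConvexOn ℝ Set.univ (pY ∘ (AffineMap.lineMap x y : ℝ →ᵃ[ℝ] _)) := by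
    have := hpconv.comp_affineMap (AffineMap.lineMap x y : ℝ →ᵃ[ℝ] EuclideanSpace ℝ (Fin n))
    simpa using this
  have hc : HasDerivAt (fun t : ℝ => (AffineMap.lineMap x y : ℝ →ᵃ[ℝ] _) t) (y - x) 0 := by
    have h1 : HasDerivAt (fun t : ℝ => x + t • (y - x)) (y - x) 0 := by
      simpa using (((hasDerivAt_id (0:ℝ)).smul_const (y - x)).const_add x)
    exact h1.congr_of_eventuallyEq (Filter.Eventually.of_forall fun t => (hline t))
  have hf : HasFDerivAt pY (InnerProductSpace.toDual ℝ _ g) x := hg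
  have hf' : HasFDerivAt pY (InnerProductSpace.toDual ℝ _ g)
      ((AffineMap.lineMap x y : ℝ →ᵃ[ℝ] _) (0:ℝ)) := by
    rw [hline]; simpa using hf
  have hφd : HasDerivAt (pY ∘ (AffineMap.lineMap x y : ℝ →ᵃ[ℝ] _)) ⟪g, y - x⟫ 0 := by
    have := hf'.comp_hasDerivAt (0:ℝ) hc
    simpa [InnerProductSpace.toDual_apply_apply] using this
  have hslope := hφconv.le_slope_of_hasDerivAt (Set.mem_univ (0:ℝ)) (Set.mem_univ (1:ℝ))
    one_pos hφd
  rw [slope_def_field] at hslope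
  simp only [Function.comp_apply, AffineMap.lineMap_apply_one, AffineMap.lineMap_apply_zero,
    sub_zero, div_one] at hslope
  linarith


set_option maxHeartbeats 1000000 in
/-- the smoothed gap satisfies
`S_β(x̄; ẏ) ≥ β·b_Y(y*, y*_β(Ax̄; ẏ)) − β·b_Y(y*, ẏ)`; consequently, with `β_b := βL`,
`‖ẏ − y*‖² + (2/β_b)·S_β(x̄; ẏ) ≥ 0`. -/
theorem stmt12 {p n : ℕ}
    (K : Set (EuclideanSpace ℝ (Fin n)))
    (hKne : K.Nonempty) (hKcl : IsClosed K) (hKconv : Convex ℝ K)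
    (A : EuclideanSpace ℝ (Fin p) →L[ℝ] EuclideanSpace ℝ (Fin n))
    (b : EuclideanSpace ℝ (Fin n))
    (f : EuclideanSpace ℝ (Fin p) → EReal)
    (hf_proper : ∃ x, f x ≠ ⊤) (hf_nebot : ∀ x, f x ≠ ⊥)
    (hf_lsc : LowerSemicontinuous f)
    (hf_conv : ∀ x₁ x₂ : EuclideanSpace ℝ (Fin p), ∀ a b' : ℝ, 0 ≤ a → 0 ≤ b' → a + b' = 1 →
      f (a • x₁ + b' • x₂) ≤ (a : EReal) * f x₁ + (b' : EReal) * f x₂)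
    -- the constrained problem `f* = min { f(x) : Ax − b ∈ K }` is attained at the feasible `x*`
    (fstar : ℝ) (xstar : EuclideanSpace ℝ (Fin p))
    (hfeas : A xstar - b ∈ K) (hval : f xstar = (fstar : EReal))
    (hopt : ∀ x, A x - b ∈ K → (fstar : EReal) ≤ f x)
    -- `y*` is a Lagrange multiplier
    (ystar : EuclideanSpace ℝ (Fin n))
    (hmult : ∀ x : EuclideanSpace ℝ (Fin p), ∀ u ∈ K,
      (fstar : EReal) ≤ f x + ((⟪ystar, A x - b - u⟫ : ℝ) : EReal))
    -- the prox-function `p_Y`: differentiable, convex, 1-strongly convex, `L`-Lipschitz gradient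
    (pY : EuclideanSpace ℝ (Fin n) → ℝ)
    (pY' : EuclideanSpace ℝ (Fin n) → EuclideanSpace ℝ (Fin n))
    (hgrad : ∀ y, HasGradientAt pY (pY' y) y)
    (hpconv : ConvexOn ℝ Set.univ pY)
    (hpstrong : StrongConvexOn Set.univ 1 pY)
    (L : ℝ) (hL : 1 ≤ L) (hlip : LipschitzWith (Real.toNNReal L) pY')
    (hlow : ∀ y z, 1 / 2 * ‖y - z‖ ^ 2 ≤ breg pY pY' y z)
    (hup : ∀ y z, breg pY pY' y z ≤ L / 2 * ‖y - z‖ ^ 2)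
    (β : ℝ) (hβ : 0 < β) (ydot : EuclideanSpace ℝ (Fin n))
    (xbar : EuclideanSpace ℝ (Fin p)) (hxbar : f xbar ≠ ⊤)
    -- `ystarβ` is the unique maximizer attaining the supremum defining `g_β(Ax̄; ẏ)`
    (ystarβ : EuclideanSpace ℝ (Fin n))
    (hystarβ : ∀ y : EuclideanSpace ℝ (Fin n),
      ((⟪A xbar - b, y⟫ : ℝ) : EReal) - suppFn K y - ((β * breg pY pY' y ydot : ℝ) : EReal) ≤
      ((⟪A xbar - b, ystarβ⟫ : ℝ) : EReal) - suppFn K ystarβ -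
        ((β * breg pY pY' ystarβ ydot : ℝ) : EReal)) :
    ((β * breg pY pY' ystar ystarβ - β * breg pY pY' ystar ydot : ℝ) : EReal) ≤
        f xbar + gsmoothK K pY pY' β ydot (A xbar - b) - (fstar : EReal) ∧
      ∀ S : ℝ,
        ((S : EReal) = f xbar + gsmoothK K pY pY' β ydot (A xbar - b) - (fstar : EReal)) →
        0 ≤ ‖ydot - ystar‖ ^ 2 + 2 / (β * L) * S := by
  obtain ⟨u₀, hu₀⟩ := hKne
  set w : EuclideanSpace ℝ (Fin n) := A xbar - b with hw
  set F : ℝ := (f xbar).toReal with hFdef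
  have hF : (F : EReal) = f xbar := EReal.coe_toReal hxbar (hf_nebot xbar)
  have hsle : ∀ (u : EuclideanSpace ℝ (Fin n)), u ∈ K → ∀ y,
      ((⟪u, y⟫ : ℝ) : EReal) ≤ suppFn K y := by
    intro u hu y
    exact le_iSup₂ (f := fun u (_ : u ∈ K) => ((⟪u, y⟫ : ℝ) : EReal)) u hu
  have hsnb : ∀ y, suppFn K y ≠ ⊥ := by
    intro y h
    have h2 := hsle u₀ hu₀ y
    rw [h, le_bot_iff] at h2
    exact EReal.coe_ne_bot _ h2
  have hs0 : suppFn K 0 = ((0 : ℝ) : EReal) := by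
    refine le_antisymm (iSup₂_le fun u _ => ?_) ?_
    · simp [inner_zero_right]
    · simpa [inner_zero_right] using hsle u₀ hu₀ 0
  -- suppFn K ystarβ is finite
  have hsβt : suppFn K ystarβ ≠ ⊤ := by
    intro h
    have h0 := hystarβ 0
    rw [h, hs0, EReal.sub_top, EReal.bot_sub, le_bot_iff] at h0
    have : ((⟪w, (0:EuclideanSpace ℝ (Fin n))⟫ : ℝ) : EReal)
        - ((0:ℝ) : EReal) - ((β * breg pY pY' 0 ydot : ℝ) : EReal)
        = ((⟪w, (0:EuclideanSpace ℝ (Fin n))⟫ - 0 - β * breg pY pY' 0 ydot : ℝ) : EReal) := by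
      rw [EReal.coe_sub, EReal.coe_sub]
    rw [this] at h0
    exact EReal.coe_ne_bot _ h0
  set sβ : ℝ := (suppFn K ystarβ).toReal with hsβdef
  have hsβ : suppFn K ystarβ = ((sβ : ℝ) : EReal) := (EReal.coe_toReal hsβt (hsnb _)).symm
  -- suppFn K ystar is finite and bounded
  have hsstar_le : suppFn K ystar ≤ ((F + ⟪w, ystar⟫ - fstar : ℝ) : EReal) := by
    refine iSup₂_le fun u hu => ?_
    have hm := hmult xbar u hu
    rw [← hF, ← EReal.coe_add] at hm
    have hm' : fstar ≤ F + ⟪ystar, w - u⟫ := EReal.coe_le_coe_iff.mp hm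
    refine EReal.coe_le_coe_iff.mpr ?_
    rw [inner_sub_right] at hm'
    have hc1 : ⟪ystar, u⟫ = ⟪u, ystar⟫ := real_inner_comm _ _
    have hc2 : ⟪ystar, w⟫ = ⟪w, ystar⟫ := real_inner_comm _ _
    linarith
  have hst : suppFn K ystar ≠ ⊤ := by
    intro h
    rw [h, top_le_iff] at hsstar_le
    exact EReal.coe_ne_top _ hsstar_le
  set sstar : ℝ := (suppFn K ystar).toReal with hsstardef
  have hsstar : suppFn K ystar = ((sstar : ℝ) : EReal) := (EReal.coe_toReal hst (hsnb _)).symm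
  have hsstarb : sstar ≤ F + ⟪w, ystar⟫ - fstar := by
    rw [hsstar] at hsstar_le
    exact EReal.coe_le_coe_iff.mp hsstar_le
  set d : EuclideanSpace ℝ (Fin n) := ystar - ystarβ with hd
  set Gr : ℝ := ⟪w, ystarβ⟫ - sβ - β * breg pY pY' ystarβ ydot with hGr
  have hφβ : ((⟪w, ystarβ⟫ : ℝ) : EReal) - suppFn K ystarβ
      - ((β * breg pY pY' ystarβ ydot : ℝ) : EReal) = ((Gr : ℝ) : EReal) := by
    rw [hsβ, hGr, EReal.coe_sub, EReal.coe_sub]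
  -- segment inequality
  have hseg : ∀ t : ℝ, 0 < t → t ≤ 1 →
      ⟪w, d⟫ + sβ - sstar ≤ β * (⟪pY' ystarβ, d⟫ - ⟪pY' ydot, d⟫) + β * L * t * ‖d‖ ^ 2 := by
    intro t ht0 ht1
    set yt : EuclideanSpace ℝ (Fin n) := ystarβ + t • d with hyt
    have hytsub : yt - ystarβ = t • d := by rw [hyt]; abel
    have hsupyt : suppFn K yt ≤ (((1 - t) * sβ + t * sstar : ℝ) : EReal) := by
      refine iSup₂_le fun u hu => EReal.coe_le_coe_iff.mpr ?_
      have h1 : ⟪u, ystarβ⟫ ≤ sβ := EReal.coe_le_coe_iff.mp (hsβ ▸ hsle u hu ystarβ)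
      have h2 : ⟪u, ystar⟫ ≤ sstar := EReal.coe_le_coe_iff.mp (hsstar ▸ hsle u hu ystar)
      have he : ⟪u, yt⟫ = (1 - t) * ⟪u, ystarβ⟫ + t * ⟪u, ystar⟫ := by
        rw [hyt, hd, inner_add_right, real_inner_smul_right, inner_sub_right]
        ring
      rw [he]
      nlinarith [mul_le_mul_of_nonneg_left h1 (by linarith : (0:ℝ) ≤ 1 - t),
        mul_le_mul_of_nonneg_left h2 ht0.le]
    have hE : ((⟪w, yt⟫ - ((1 - t) * sβ + t * sstar) - β * breg pY pY' yt ydot : ℝ) : EReal)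
        ≤ ((Gr : ℝ) : EReal) := by
      calc ((⟪w, yt⟫ - ((1 - t) * sβ + t * sstar) - β * breg pY pY' yt ydot : ℝ) : EReal)
          = ((⟪w, yt⟫ : ℝ) : EReal) - (((1 - t) * sβ + t * sstar : ℝ) : EReal)
            - ((β * breg pY pY' yt ydot : ℝ) : EReal) := by
            rw [EReal.coe_sub, EReal.coe_sub]
        _ ≤ ((⟪w, yt⟫ : ℝ) : EReal) - suppFn K yt
            - ((β * breg pY pY' yt ydot : ℝ) : EReal) :=
            EReal.sub_le_sub (EReal.sub_le_sub le_rfl hsupyt) le_rfl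
        _ ≤ ((⟪w, ystarβ⟫ : ℝ) : EReal) - suppFn K ystarβ
            - ((β * breg pY pY' ystarβ ydot : ℝ) : EReal) := hystarβ yt
        _ = ((Gr : ℝ) : EReal) := hφβ
    have hreal := EReal.coe_le_coe_iff.mp hE
    have e1 : ⟪w, yt⟫ = ⟪w, ystarβ⟫ + t * ⟪w, d⟫ := by
      rw [hyt, inner_add_right, real_inner_smul_right]
    have e2 : ⟪pY' ydot, yt - ydot⟫ = ⟪pY' ydot, ystarβ - ydot⟫ + t * ⟪pY' ydot, d⟫ := by
      have h9 : yt - ydot = (ystarβ - ydot) + t • d := by rw [hyt]; abel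
      rw [h9, inner_add_right, real_inner_smul_right]
    rw [hGr] at hreal
    simp only [breg] at hreal
    rw [e1, e2] at hreal
    have hgi := grad_ineq hpconv (hgrad yt) ystarβ
    have e3 : ystarβ - yt = -(t • d) := by rw [hyt]; abel
    rw [e3, inner_neg_right, real_inner_smul_right] at hgi
    have h4 : ‖pY' yt - pY' ystarβ‖ ≤ L * ‖yt - ystarβ‖ := by
      have h10 := hlip.dist_le_mul yt ystarβ
      rw [dist_eq_norm, dist_eq_norm, Real.coe_toNNReal L (by linarith)] at h10
      exact h10
    have h5 : ‖yt - ystarβ‖ = t * ‖d‖ := by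
      rw [hytsub, norm_smul, Real.norm_eq_abs, abs_of_pos ht0]
    have h3 : ⟪pY' yt - pY' ystarβ, d⟫ ≤ ‖pY' yt - pY' ystarβ‖ * ‖d‖ := real_inner_le_norm _ _
    have h7 : ⟪pY' yt - pY' ystarβ, d⟫ = ⟪pY' yt, d⟫ - ⟪pY' ystarβ, d⟫ := inner_sub_left _ _ _
    have h6 : ⟪pY' yt, d⟫ ≤ ⟪pY' ystarβ, d⟫ + L * t * ‖d‖ ^ 2 := by
      rw [h5] at h4
      nlinarith [mul_le_mul_of_nonneg_right h4 (norm_nonneg d), norm_nonneg d]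
    have hstep : t * (⟪w, d⟫ + sβ - sstar)
        ≤ β * (pY yt - pY ystarβ) - β * t * ⟪pY' ydot, d⟫ := by linarith [hreal]
    have hA := mul_le_mul_of_nonneg_left
      (show pY yt - pY ystarβ ≤ t * ⟪pY' yt, d⟫ by linarith) hβ.le
    have hB := mul_le_mul_of_nonneg_left h6 (mul_pos hβ ht0).le
    have hfin : t * (⟪w, d⟫ + sβ - sstar)
        ≤ t * (β * (⟪pY' ystarβ, d⟫ - ⟪pY' ydot, d⟫) + β * L * t * ‖d‖ ^ 2) := by
      nlinarith [hstep, hA, hB]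
    exact le_of_mul_le_mul_left hfin ht0
  -- key inequality via t → 0
  have hkey : ⟪w, d⟫ + sβ - sstar ≤ β * (⟪pY' ystarβ, d⟫ - ⟪pY' ydot, d⟫) := by
    by_contra hcon
    push_neg at hcon
    have hnd : 0 ≤ β * L * ‖d‖ ^ 2 :=
      mul_nonneg (mul_nonneg hβ.le (by linarith)) (sq_nonneg _)
    set cc : ℝ := ⟪w, d⟫ + sβ - sstar with hcc
    set B2 : ℝ := β * (⟪pY' ystarβ, d⟫ - ⟪pY' ydot, d⟫) with hB2
    set D : ℝ := β * L * ‖d‖ ^ 2 + 1 with hD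
    have hD0 : (0:ℝ) < D := by rw [hD]; linarith
    set t : ℝ := min 1 ((cc - B2) / (2 * D)) with htdef
    have ht0 : 0 < t := lt_min one_pos (div_pos (by linarith) (by linarith))
    have ht1 : t ≤ 1 := min_le_left _ _
    have h := hseg t ht0 ht1
    have htle : t ≤ (cc - B2) / (2 * D) := min_le_right _ _
    have h11 : t * (2 * D) ≤ cc - B2 := by
      rw [← le_div_iff₀ (by linarith : (0:ℝ) < 2 * D)]
      exact htle
    have h8 : β * L * t * ‖d‖ ^ 2 ≤ t * D := by nlinarith [ht0.le]
    nlinarith [h, h8, h11, hcon, hD0, ht0]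
  -- main real inequality
  have e4 : ⟪pY' ydot, ystar - ydot⟫ - ⟪pY' ydot, ystarβ - ydot⟫ = ⟪pY' ydot, d⟫ := by
    rw [← inner_sub_right, hd]
    congr 1
    abel
  have e5 : ⟪pY' ystarβ, ystar - ystarβ⟫ = ⟪pY' ystarβ, d⟫ := by rw [hd]
  have e6 : ⟪w, d⟫ = ⟪w, ystar⟫ - ⟪w, ystarβ⟫ := by rw [hd, inner_sub_right]
  have hid : breg pY pY' ystar ystarβ - breg pY pY' ystar ydot + breg pY pY' ystarβ ydot
      = ⟪pY' ydot, d⟫ - ⟪pY' ystarβ, d⟫ := by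
    simp only [breg]
    rw [e5]
    linarith [e4]
  have hidβ := congrArg (fun z => β * z) hid
  have hclaim : β * breg pY pY' ystar ystarβ - β * breg pY pY' ystar ydot ≤ F + Gr - fstar := by
    rw [hGr]
    nlinarith [hidβ, hkey, hsstarb, e6]
  -- the value of the smoothed function
  have hG : gsmoothK K pY pY' β ydot w = ((Gr : ℝ) : EReal) := by
    refine le_antisymm (iSup_le fun y => (hystarβ y).trans (le_of_eq hφβ)) ?_
    rw [← hφβ]
    exact le_iSup (fun y => ((⟪w, y⟫ : ℝ) : EReal) - suppFn K y
      - ((β * breg pY pY' y ydot : ℝ) : EReal)) ystarβ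
  constructor
  · rw [hG, ← hF, ← EReal.coe_add, ← EReal.coe_sub]
    exact EReal.coe_le_coe_iff.mpr hclaim
  · intro S hS
    rw [hG, ← hF, ← EReal.coe_add, ← EReal.coe_sub] at hS
    have hSr : S = F + Gr - fstar := EReal.coe_eq_coe_iff.mp hS
    have h1 : (0:ℝ) ≤ breg pY pY' ystar ystarβ :=
      le_trans (by positivity) (hlow ystar ystarβ)
    have h2 : breg pY pY' ystar ydot ≤ L / 2 * ‖ystar - ydot‖ ^ 2 := hup _ _
    have hn : ‖ydot - ystar‖ = ‖ystar - ydot‖ := norm_sub_rev _ _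
    have hβL : (0:ℝ) < β * L := mul_pos hβ (by linarith)
    have hc : (0:ℝ) < 2 / (β * L) := by positivity
    have hSlow : β * breg pY pY' ystar ystarβ - β * breg pY pY' ystar ydot ≤ S := by
      rw [hSr]; exact hclaim
    have key : 0 ≤ β * L / 2 * ‖ydot - ystar‖ ^ 2 + S := by
      rw [hn]
      nlinarith [mul_le_mul_of_nonneg_left h2 hβ.le, mul_nonneg hβ.le h1, hSlow]
    have hmm := mul_le_mul_of_nonneg_left
      (show -(β * L / 2 * ‖ydot - ystar‖ ^ 2) ≤ S by linarith) hc.le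
    have heq : 2 / (β * L) * (β * L / 2 * ‖ydot - ystar‖ ^ 2) = ‖ydot - ystar‖ ^ 2 := by
      field_simp
    nlinarith [hmm, heq]

end
end

section
/- For every β > 0, every ẏ ∈ ℝ^n, and every x ∈ ℝ^p, setting β_b := βL, the smoothed function satisfies the lower bound g_β(Ax; ẏ) ≥ (1/(2β_b))·dist_K(Ax − b + β_b ẏ)² − (β_b/2)‖ẏ‖². -/
open RealInnerProductSpace

noncomputable section

private lemma stmt13_key {n : ℕ} (t : ℝ) (ht : 0 < t) (w u ydot : EuclideanSpace ℝ (Fin n)) :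
    1 / (2 * t) * ‖w + t • ydot - u‖ ^ 2 - t / 2 * ‖ydot‖ ^ 2 =
    ⟪w, t⁻¹ • (w + t • ydot - u)⟫ - ⟪u, t⁻¹ • (w + t • ydot - u)⟫
      - t / 2 * ‖t⁻¹ • (w + t • ydot - u) - ydot‖ ^ 2 := by
  set r := w + t • ydot - u with hr
  have hwu : w - u = r - t • ydot := by rw [hr]; abel
  have h1 : ⟪w, t⁻¹ • r⟫ - ⟪u, t⁻¹ • r⟫ = t⁻¹ * (⟪r, r⟫ - t * ⟪ydot, r⟫) := by
    rw [← inner_sub_left, hwu, inner_sub_left, real_inner_smul_right, real_inner_smul_right,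
      real_inner_smul_left]
    ring
  have h2 : ‖t⁻¹ • r - ydot‖ ^ 2 = t⁻¹ ^ 2 * ⟪r, r⟫ - 2 * t⁻¹ * ⟪r, ydot⟫ + ‖ydot‖ ^ 2 := by
    rw [← real_inner_self_eq_norm_sq, inner_sub_sub_self, real_inner_smul_left,
      real_inner_smul_right, real_inner_smul_left, real_inner_smul_right,
      real_inner_self_eq_norm_sq, real_inner_self_eq_norm_sq, real_inner_comm ydot r]
    ring
  rw [h1, h2, ← real_inner_self_eq_norm_sq, real_inner_comm ydot r]
  field_simp
  ring

/-- with `β_b := βL`, the smoothed function satisfies the lower bound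
`g_β(Ax; ẏ) ≥ (1/(2β_b))·dist_K(Ax − b + β_b ẏ)² − (β_b/2)‖ẏ‖²`. -/
theorem stmt13 {p n : ℕ}
    (K : Set (EuclideanSpace ℝ (Fin n)))
    (hKne : K.Nonempty) (hKcl : IsClosed K) (hKconv : Convex ℝ K)
    (A : EuclideanSpace ℝ (Fin p) →L[ℝ] EuclideanSpace ℝ (Fin n))
    (b : EuclideanSpace ℝ (Fin n))
    -- the prox-function `p_Y`: differentiable, convex, 1-strongly convex, `L`-Lipschitz gradient
    (pY : EuclideanSpace ℝ (Fin n) → ℝ)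
    (pY' : EuclideanSpace ℝ (Fin n) → EuclideanSpace ℝ (Fin n))
    (hgrad : ∀ y, HasGradientAt pY (pY' y) y)
    (hpconv : ConvexOn ℝ Set.univ pY)
    (hpstrong : StrongConvexOn Set.univ 1 pY)
    (L : ℝ) (hL : 1 ≤ L) (hlip : LipschitzWith (Real.toNNReal L) pY')
    (hlow : ∀ y z, 1 / 2 * ‖y - z‖ ^ 2 ≤ breg pY pY' y z)
    (hup : ∀ y z, breg pY pY' y z ≤ L / 2 * ‖y - z‖ ^ 2)
    (β : ℝ) (hβ : 0 < β) (ydot : EuclideanSpace ℝ (Fin n))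
    (x : EuclideanSpace ℝ (Fin p)) :
    ((1 / (2 * (β * L)) * (Metric.infDist (A x - b + (β * L) • ydot) K) ^ 2 -
        (β * L) / 2 * ‖ydot‖ ^ 2 : ℝ) : EReal) ≤
      gsmoothK K pY pY' β ydot (A x - b) := by
  have ht : (0 : ℝ) < β * L := mul_pos hβ (lt_of_lt_of_le one_pos hL)
  set t : ℝ := β * L with htdef
  set w : EuclideanSpace ℝ (Fin n) := A x - b with hw
  set v : EuclideanSpace ℝ (Fin n) := w + t • ydot with hv
  obtain ⟨us, hus, hproj⟩ :=
    exists_norm_eq_iInf_of_complete_convex hKne hKcl.isComplete hKconv v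
  have hdist : Metric.infDist v K = ‖v - us‖ := by
    rw [Metric.infDist_eq_iInf]
    simp_rw [dist_eq_norm]
    exact hproj.symm
  have hchar := (norm_eq_iInf_iff_real_inner_le_zero hKconv hus).mp hproj
  set ys : EuclideanSpace ℝ (Fin n) := t⁻¹ • (v - us) with hys
  -- upper bound on the support function at ys
  have hsup_le : suppFn K ys ≤ ((⟪us, ys⟫ : ℝ) : EReal) := by
    refine iSup₂_le fun u hu => EReal.coe_le_coe_iff.mpr ?_
    have h0 : ⟪u, ys⟫ - ⟪us, ys⟫ = t⁻¹ * ⟪v - us, u - us⟫ := by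
      rw [← inner_sub_left, hys, real_inner_smul_right, real_inner_comm]
    nlinarith [hchar u hu, inv_pos.mpr ht, mul_nonpos_of_nonneg_of_nonpos
      (le_of_lt (inv_pos.mpr ht)) (hchar u hu)]
  obtain ⟨u0, hu0⟩ := hKne
  have hsup_ge : ((⟪u0, ys⟫ : ℝ) : EReal) ≤ suppFn K ys :=
    le_iSup₂ (f := fun u (_ : u ∈ K) => ((⟪u, ys⟫ : ℝ) : EReal)) u0 hu0
  have hne_top : suppFn K ys ≠ ⊤ :=
    ne_top_of_le_ne_top (EReal.coe_ne_top _) hsup_le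
  have hne_bot : suppFn K ys ≠ ⊥ := by
    intro h
    rw [h] at hsup_ge
    exact (EReal.coe_ne_bot _) (le_bot_iff.mp hsup_ge)
  set sr : ℝ := (suppFn K ys).toReal with hsr
  have hS : ((sr : ℝ) : EReal) = suppFn K ys := EReal.coe_toReal hne_top hne_bot
  have hsr_le : sr ≤ ⟪us, ys⟫ := EReal.coe_le_coe_iff.mp (hS.le.trans hsup_le)
  -- plug ys into the sup
  refine le_trans ?_ (le_iSup _ ys)
  rw [← hS, ← EReal.coe_sub, ← EReal.coe_sub, EReal.coe_le_coe_iff]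
  have hbreg : β * breg pY pY' ys ydot ≤ t / 2 * ‖ys - ydot‖ ^ 2 := by
    have := mul_le_mul_of_nonneg_left (hup ys ydot) hβ.le
    calc β * breg pY pY' ys ydot ≤ β * (L / 2 * ‖ys - ydot‖ ^ 2) := this
      _ = t / 2 * ‖ys - ydot‖ ^ 2 := by rw [htdef]; ring
  have hkey := stmt13_key t ht w us ydot
  have hvv : v - us = w + t • ydot - us := by rw [hv]
  rw [hdist]
  rw [hys, hvv] at *
  linarith [hkey, hbreg, hsr_le]

end
end

section
/- (Growth of the inner-loop lengths.) Let ω > 1 be a real number and let (m_s)_{s ≥ 0} be the sequence of positive integers defined by an initial m_0 ≥ 1 and the recursion m_{s+1} := ⌊ω(m_s + 1) + 1⌋ − 1. Then for every s ≥ 0: (m_0 + 1)ω^s − 1 ≤ m_s ≤ (m_0 + ω/(ω − 1))ω^s − ω/(ω − 1); in particular m_0·ω^s ≤ m_s ≤ κ_0·ω^s, where κ_0 := m_0 + ω/(ω − 1). -/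
noncomputable section

/-- growth of the inner-loop lengths. -/
theorem stmt15 (ω : ℝ) (hω : 1 < ω)
    (m : ℕ → ℕ) (hm0 : 1 ≤ m 0)
    (hrec : ∀ s, (m (s + 1) : ℤ) = ⌊ω * ((m s : ℝ) + 1) + 1⌋ - 1) :
    ∀ s : ℕ,
      (((m 0 : ℝ) + 1) * ω ^ s - 1 ≤ (m s : ℝ) ∧
        (m s : ℝ) ≤ ((m 0 : ℝ) + ω / (ω - 1)) * ω ^ s - ω / (ω - 1)) ∧
      ((m 0 : ℝ) * ω ^ s ≤ (m s : ℝ) ∧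
        (m s : ℝ) ≤ ((m 0 : ℝ) + ω / (ω - 1)) * ω ^ s) := by
  have hω0 : (0:ℝ) < ω := by linarith
  have hω1 : (0:ℝ) < ω - 1 := by linarith
  have hq : (0:ℝ) < ω / (ω - 1) := div_pos hω0 hω1
  -- bounds on the recursion
  have hlb : ∀ s, ω * ((m s : ℝ) + 1) - 1 ≤ (m (s+1) : ℝ) := by
    intro s
    have h := hrec s
    have h1 : (⌊ω * ((m s : ℝ) + 1) + 1⌋ : ℝ) > ω * ((m s : ℝ) + 1) + 1 - 1 :=
      Int.sub_one_lt_floor _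
    have h2 : ((m (s+1) : ℤ) : ℝ) = (⌊ω * ((m s : ℝ) + 1) + 1⌋ : ℝ) - 1 := by
      exact_mod_cast congrArg (Int.cast : ℤ → ℝ) h
    push_cast at h2
    linarith
  have hub : ∀ s, (m (s+1) : ℝ) ≤ ω * ((m s : ℝ) + 1) := by
    intro s
    have h := hrec s
    have h1 : (⌊ω * ((m s : ℝ) + 1) + 1⌋ : ℝ) ≤ ω * ((m s : ℝ) + 1) + 1 :=
      Int.floor_le _
    have h2 : ((m (s+1) : ℤ) : ℝ) = (⌊ω * ((m s : ℝ) + 1) + 1⌋ : ℝ) - 1 := by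
      exact_mod_cast congrArg (Int.cast : ℤ → ℝ) h
    push_cast at h2
    linarith
  have main : ∀ s : ℕ, ((m 0 : ℝ) + 1) * ω ^ s - 1 ≤ (m s : ℝ) ∧
      (m s : ℝ) ≤ ((m 0 : ℝ) + ω / (ω - 1)) * ω ^ s - ω / (ω - 1) := by
    intro s
    induction s with
    | zero => simp
    | succ n ih =>
      obtain ⟨ih1, ih2⟩ := ih
      constructor
      · have := hlb n
        have : ω * (((m 0 : ℝ) + 1) * ω ^ n - 1 + 1) - 1 ≤ (m (n+1) : ℝ) := by
          have hmono : ω * (((m 0 : ℝ) + 1) * ω ^ n - 1 + 1) ≤ ω * ((m n : ℝ) + 1) := by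
            apply mul_le_mul_of_nonneg_left (by linarith) (le_of_lt hω0)
          linarith [hlb n]
        calc ((m 0 : ℝ) + 1) * ω ^ (n+1) - 1
            = ω * (((m 0 : ℝ) + 1) * ω ^ n - 1 + 1) - 1 := by ring
          _ ≤ (m (n+1) : ℝ) := this
      · have hmono : ω * ((m n : ℝ) + 1) ≤
            ω * (((m 0 : ℝ) + ω / (ω - 1)) * ω ^ n - ω / (ω - 1) + 1) :=
          mul_le_mul_of_nonneg_left (by linarith) (le_of_lt hω0)
        have key : ω * (((m 0 : ℝ) + ω / (ω - 1)) * ω ^ n - ω / (ω - 1) + 1)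
            = ((m 0 : ℝ) + ω / (ω - 1)) * ω ^ (n+1) - ω / (ω - 1) := by
          field_simp
          ring
        linarith [hub n]
  intro s
  obtain ⟨h1, h2⟩ := main s
  have hpow : (1:ℝ) ≤ ω ^ s := one_le_pow₀ (le_of_lt hω)
  refine ⟨⟨h1, h2⟩, ?_, by linarith⟩
  nlinarith
end
end

section
/- (Two-sided bound on the smoothness parameters in the constrained case.) Let ω > 1 be real, and let (m_s)_{s ≥ 0} be the integer sequence with m_0 ≥ 1, m_0 > 1/(ω − 1), and m_{s+1} := ⌊ω(m_s + 1) + 1⌋ − 1. Let (β_s)_{s ≥ 0} be the positive reals defined by β_0 > 0 and β_{s+1} := β_s·(m_{s+1} + 1)/(ω·√(m_{s+1}(m_{s+1} + 3))). Then for every s ≥ 0: β_0·(1 − 1/(m_0(ω − 1)))·ω^{−s} ≤ β_s ≤ β_0·ω^{−s}. -/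
noncomputable section

lemma ratio_bounds (x : ℝ) (hx : 1 ≤ x) :
    1 - 1/x ≤ (x+1)/Real.sqrt (x*(x+3)) ∧ (x+1)/Real.sqrt (x*(x+3)) ≤ 1 := by
  have hx0 : 0 < x := by linarith
  have hD : 0 < x*(x+3) := by nlinarith
  have hs : 0 < Real.sqrt (x*(x+3)) := Real.sqrt_pos.mpr hD
  constructor
  · have hle : Real.sqrt (x*(x+3)) ≤ x + 3/2 := by
      have h := Real.sqrt_le_sqrt (show x*(x+3) ≤ (x+3/2)^2 by nlinarith)
      rwa [Real.sqrt_sq (by linarith)] at h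
    have h1 : (x+1)/(x+3/2) ≤ (x+1)/Real.sqrt (x*(x+3)) :=
      div_le_div_of_nonneg_left (by linarith) hs hle
    have h2 : (x-1)/x ≤ (x+1)/(x+3/2) := by
      rw [div_le_div_iff₀ hx0 (by linarith)]; nlinarith
    have h3 : 1 - 1/x = (x-1)/x := by field_simp
    linarith
  · rw [div_le_one hs]
    calc x + 1 = Real.sqrt ((x+1)^2) := (Real.sqrt_sq (by linarith)).symm
      _ ≤ Real.sqrt (x*(x+3)) := Real.sqrt_le_sqrt (by nlinarith)

/-- two-sided bound on the smoothness parameters in the constrained case. -/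
theorem stmt17 (ω : ℝ) (hω : 1 < ω)
    (m : ℕ → ℕ) (hm0 : 1 ≤ m 0) (hm0' : 1 / (ω - 1) < (m 0 : ℝ))
    (hrec : ∀ s, (m (s + 1) : ℤ) = ⌊ω * ((m s : ℝ) + 1) + 1⌋ - 1)
    (β : ℕ → ℝ) (hβ0 : 0 < β 0)
    (hβpos : ∀ s, 0 < β s)
    (hβrec : ∀ s, β (s + 1) =
      β s * ((m (s + 1) : ℝ) + 1) /
        (ω * Real.sqrt ((m (s + 1) : ℝ) * ((m (s + 1) : ℝ) + 3)))) :
    ∀ s : ℕ,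
      β 0 * (1 - 1 / ((m 0 : ℝ) * (ω - 1))) * (ω ^ s)⁻¹ ≤ β s ∧
        β s ≤ β 0 * (ω ^ s)⁻¹ := by
  have hω0 : 0 < ω := by linarith
  have hω1 : ω - 1 > 0 := by linarith
  have hm0R : (1:ℝ) ≤ (m 0 : ℝ) := by exact_mod_cast hm0
  -- growth of m
  have grow : ∀ s, 1 ≤ (m s : ℝ) ∧ (m 0 : ℝ) * ω ^ s ≤ (m s : ℝ) := by
    intro s
    induction s with
    | zero => simpa using hm0R
    | succ s ih =>
      have hfl : (m (s+1) : ℝ) = ((⌊ω * ((m s : ℝ) + 1) + 1⌋ : ℤ) : ℝ) - 1 := by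
        exact_mod_cast hrec s
      have h1 : ω * ((m s:ℝ)+1) + 1 - 1 < ((⌊ω * ((m s : ℝ) + 1) + 1⌋ : ℤ) : ℝ) :=
        Int.sub_one_lt_floor _
      have h2 : ω * (m s : ℝ) ≤ (m (s+1) : ℝ) := by
        rw [hfl]; nlinarith [ih.1]
      constructor
      · nlinarith [ih.1]
      · calc (m 0 : ℝ) * ω ^ (s+1) = ω * ((m 0 : ℝ) * ω ^ s) := by ring
          _ ≤ ω * (m s : ℝ) := by nlinarith [ih.2]
          _ ≤ (m (s+1) : ℝ) := h2
  -- constant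
  set c : ℝ := 1 / ((m 0 : ℝ) * (ω - 1)) with hc
  have hprod : 1 < (m 0 : ℝ) * (ω - 1) := by
    rw [div_lt_iff₀ hω1] at hm0'
    linarith [hm0']
  have hc0 : 0 < c := by positivity
  have hc1 : c < 1 := by
    rw [hc, div_lt_one (by linarith)]; exact hprod
  have hpow : ∀ s : ℕ, 0 < (ω ^ s : ℝ)⁻¹ := fun s => by positivity
  -- upper bound
  have ub : ∀ s, β s ≤ β 0 * (ω ^ s)⁻¹ := by
    intro s
    induction s with
    | zero => simp
    | succ s ih =>
      have hM := grow (s+1)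
      set M : ℝ := (m (s+1) : ℝ) with hMdef
      have hM1 : 1 ≤ M := hM.1
      have hM0 : 0 < M := by linarith
      have hsne : Real.sqrt (M*(M+3)) ≠ 0 := by positivity
      have hrb := ratio_bounds M hM1
      have heq : β (s+1) = β s * ((M+1)/Real.sqrt (M*(M+3))) * ω⁻¹ := by
        rw [hβrec s, ← hMdef, div_eq_mul_inv, div_eq_mul_inv, mul_inv]; ring
      rw [heq, pow_succ, mul_inv]
      have h1 : β s * ((M+1)/Real.sqrt (M*(M+3))) ≤ β 0 * (ω ^ s)⁻¹ := by
        calc β s * ((M+1)/Real.sqrt (M*(M+3))) ≤ β s * 1 :=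
              mul_le_mul_of_nonneg_left hrb.2 (hβpos s).le
          _ = β s := mul_one _
          _ ≤ β 0 * (ω ^ s)⁻¹ := ih
      calc β s * ((M+1)/Real.sqrt (M*(M+3))) * ω⁻¹ ≤ (β 0 * (ω ^ s)⁻¹) * ω⁻¹ :=
            mul_le_mul_of_nonneg_right h1 (by positivity)
        _ = β 0 * ((ω ^ s)⁻¹ * ω⁻¹) := by ring
  -- lower bound key
  have key : ∀ s, β 0 * (ω ^ s)⁻¹ * (1 - c + c * (ω ^ s)⁻¹) ≤ β s := by
    intro s
    induction s with
    | zero => simp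
    | succ s ih =>
      have hM := grow (s+1)
      set M : ℝ := (m (s+1) : ℝ) with hMdef
      have hM1 : 1 ≤ M := hM.1
      have hM0 : 0 < M := by linarith
      have hsne : Real.sqrt (M*(M+3)) ≠ 0 := by positivity
      have hrb := ratio_bounds M hM1
      have heq : β (s+1) = β s * ((M+1)/Real.sqrt (M*(M+3))) * ω⁻¹ := by
        rw [hβrec s, ← hMdef, div_eq_mul_inv, div_eq_mul_inv, mul_inv]; ring
      set p : ℝ := (ω ^ s)⁻¹ with hp
      set q : ℝ := (ω ^ (s+1))⁻¹ with hq
      have hp0 : 0 < p := hpow s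
      have hq0 : 0 < q := hpow (s+1)
      have hpq : q = p * ω⁻¹ := by rw [hq, hp, pow_succ, mul_inv]
      have hMge : (m 0 : ℝ) * ω ^ (s+1) ≤ M := hM.2
      have hMbig : 0 < (m 0 : ℝ) * ω ^ (s+1) := by positivity
      have hinvM : 1/M ≤ 1/((m 0 : ℝ) * ω ^ (s+1)) :=
        one_div_le_one_div_of_le hMbig hMge
      have hcpq : 1/((m 0 : ℝ) * ω ^ (s+1)) = c * (p - q) := by
        rw [hc, hp, hq]
        field_simp
        ring
      have hMcpq : 1/M ≤ c * (p - q) := by rw [← hcpq]; exact hinvM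
      have hApos : 0 < 1 - c + c * p := by
        have := mul_pos hc0 hp0
        linarith
      have hple : p ≤ 1 := by
        rw [hp]
        exact inv_le_one_of_one_le₀ (one_le_pow₀ hω.le)
      have hAle1 : 1 - c + c * p ≤ 1 := by
        have h := mul_le_mul_of_nonneg_left hple hc0.le
        linarith [h]
      have hMinv0 : 0 ≤ 1/M := by positivity
      have hkey : 1 - c + c * q ≤ (1 - c + c * p) * (1 - 1/M) := by
        have h5 : (1 - c + c * p) * (1/M) ≤ 1/M := by
          have h := mul_le_mul_of_nonneg_right hAle1 hMinv0
          linarith [h]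
        have hexp : (1 - c + c * p) * (1 - 1/M)
            = (1 - c + c * p) - (1 - c + c * p) * (1/M) := by ring
        rw [hexp]
        have hrg : c * (p - q) = c * p - c * q := by ring
        linarith [h5, hMcpq, hrg]
      have h1 : β 0 * p * (1 - c + c * p) * (1 - 1/M) ≤
          β s * ((M+1)/Real.sqrt (M*(M+3))) :=
        mul_le_mul ih hrb.1
          (by have h6 : 1/M ≤ 1 := (div_le_one hM0).mpr hM1; linarith) (hβpos s).le
      rw [heq]
      calc β 0 * q * (1 - c + c * q)
          ≤ β 0 * q * ((1 - c + c * p) * (1 - 1/M)) :=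
            mul_le_mul_of_nonneg_left hkey (by positivity)
        _ = β 0 * p * (1 - c + c * p) * (1 - 1/M) * ω⁻¹ := by rw [hpq]; ring
        _ ≤ β s * ((M+1)/Real.sqrt (M*(M+3))) * ω⁻¹ :=
            mul_le_mul_of_nonneg_right h1 (by positivity)
  intro s
  refine ⟨?_, ub s⟩
  have hk := key s
  have hnn : 0 ≤ β 0 * (ω ^ s)⁻¹ * (c * (ω ^ s)⁻¹) := by positivity
  nlinarith [hk, hnn]

end
end
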